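/- arXiv:0906.2470 — 5 statements merged into one kernel-verified Lean document; each statement's English description precedes it below -/
import Mathlib

section
/- For every m ≥ 1 and n > m, the number of ordered m-forests on a set of n labeled leaves equals (2n-m-1)! · m / ((n-m)! · 2^(n-m)); moreover the number of ordered m-forests on a set of m labeled leaves equals m!. -/
/-- Plane binary trees with ℕ-labeled leaves. -/
inductive BTree : Type
  | leaf : ℕ → BTree
  | node : BTree → BTree → BTree

namespace BTree

/-- Multiset of leaf labels. -/
def leaves : BTree → Multiset ℕ
  | leaf i => {i}
  | node l r => leaves l + leaves r

/-- Depth of the leaf labeled `i` (junk if `i` is not a leaf label). -/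
def dep : BTree → ℕ → ℕ
  | leaf _, _ => 0
  | node l r, i => if i ∈ leaves l then dep l i + 1 else dep r i + 1

/-- Path length (number of edges) between the leaves labeled `i` and `j`. -/
def dist : BTree → ℕ → ℕ → ℕ
  | leaf _, _, _ => 0
  | node l r, i, j =>
    if i ∈ leaves l ∧ j ∈ leaves l then dist l i j
    else if i ∈ leaves r ∧ j ∈ leaves r then dist r i j
    else (if i ∈ leaves l then dep l i + 1 else dep r i + 1)
       + (if j ∈ leaves l then dep l j + 1 else dep r j + 1)

/-- Isomorphism of leaf-labeled binary trees: generated by swapping the two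
children of any node, preserving leaf labels. -/
inductive Iso : BTree → BTree → Prop
  | leaf (i : ℕ) : Iso (leaf i) (leaf i)
  | node {l r l' r'} : Iso l l' → Iso r r' → Iso (node l r) (node l' r')
  | swap {l r l' r'} : Iso l r' → Iso r l' → Iso (node l r) (node l' r')

end BTree

/-- A valid fully resolved rooted phylogenetic tree on the leaf set {1,…,n}:
the multiset of leaf labels is exactly {1,…,n} (each label occurring once). -/
def BTree.valid (n : ℕ) (t : BTree) : Prop := t.leaves = (Finset.Icc 1 n).val

/-- The type of fully resolved rooted phylogenetic trees on {1,…,n}, up to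
label-preserving isomorphism. -/
def PhyloTree (n : ℕ) : Type :=
  Quot (fun a b : {t : BTree // t.valid n} => BTree.Iso a.1 b.1)

/-- The path length between leaves `i` and `j` of a phylogenetic tree,
computed on a representative. -/
noncomputable def pdist {n : ℕ} (T : PhyloTree n) (i j : ℕ) : ℕ :=
  BTree.dist T.out.1 i j

/-- Double factorial: `df n = n‼`. -/
def df : ℕ → ℕ
  | 0 => 1
  | 1 => 1
  | n + 2 => (n + 2) * df n

/-- Rising factorial (Pochhammer symbol) `(a)_k = a(a+1)⋯(a+k-1)`. -/
def rf (a : ℝ) : ℕ → ℝ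
  | 0 => 1
  | k + 1 => rf a k * (a + k)

/-- The type of ordered m-forests on the leaf set {1,…,n}, up to
label-preserving isomorphism of each component tree. -/
def PhyloForest (m n : ℕ) : Type :=
  Quot (fun f g : {f : Fin m → BTree //
      (∑ i : Fin m, (f i).leaves) = (Finset.Icc 1 n).val} =>
    ∀ i, BTree.Iso (f.1 i) (g.1 i))

/-!
In every isomorphism class take the tree in which each node lists first the child with the
smaller least label; this identifies ordered forests with tuples of such canonical trees. A
canonical tree on `s` with at least two leaves is a root over canonical trees on `A` and `s \ A`,
for any `A ∋ min s`, and a forest is its first tree followed by a forest on the remaining labels.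
Let `T = X * C(X)`, `C` the Catalan series, so that `T = X + T ^ 2`. Then `2 ^ n` times the
number of trees on `n` labels is `2 * n! * [X ^ n] T`, because the tree recurrence is the
derivative `T' = 1 + 2 * T * T'`, and `2 ^ n` times the number of `m`-forests is
`n! * 2 ^ m * [X ^ n] T ^ m`. The coefficients of `T ^ m` (ballot numbers) follow from
`T ^ (m + 1) = X * T ^ m + T ^ (m + 2)` by a two-step induction on `m`.
-/

open PowerSeries Finset Nat

theorem Finset.exists_subset_eq_val_of_add_eq_val {α : Type*} [DecidableEq α]
    {a b : Multiset α} {s : Finset α} (h : a + b = s.val) :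
    ∃ A ⊆ s, a = A.val ∧ b = (s \ A).val := by
  have ha : a.toFinset.val = a :=
    (Multiset.toFinset_val a).trans (Multiset.nodup_add.1 (h ▸ s.nodup)).1.dedup
  refine ⟨a.toFinset, ?_, ha.symm, ?_⟩
  · rw [← Finset.val_le_iff, ha, ← h]
    exact Multiset.le_add_right _ _
  · rw [Finset.sdiff_val, ha, ← h, add_tsub_cancel_left]

theorem Finset.sum_powerset_filter_mem {α β : Type*} [DecidableEq α] [AddCommMonoid β]
    {s : Finset α} {x : α} (hx : x ∈ s) (f : ℕ → β) :
    ∑ A ∈ s.powerset.filter (x ∈ ·), f #A = ∑ B ∈ (s.erase x).powerset, f (#B + 1) := by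
  have hxB : ∀ B ∈ (s.erase x).powerset, x ∉ B := fun B hB h =>
    notMem_erase x s (mem_powerset.1 hB h)
  conv_lhs => rw [← insert_erase hx]
  rw [sum_filter, sum_powerset_insert (notMem_erase x s),
    sum_eq_zero fun B hB => if_neg (hxB B hB), zero_add]
  exact sum_congr rfl fun B hB => by
    rw [if_pos (mem_insert_self x B), card_insert_of_notMem (hxB B hB)]

theorem choose_mul_factorial_mul_factorial_of_mem_antidiagonal {k : ℕ} {p : ℕ × ℕ}
    (hp : p ∈ antidiagonal k) : k.choose p.1 * p.1 ! * p.2 ! = k ! := by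
  rw [HasAntidiagonal.mem_antidiagonal] at hp
  rw [← hp, Nat.choose_symm_add, Nat.add_choose_mul_factorial_mul_factorial]

noncomputable def shiftedCatalanSeries : ℕ⟦X⟧ := X * catalanSeries

local notation "𝒯" => shiftedCatalanSeries

theorem coeff_zero_shiftedCatalanSeries : coeff 0 𝒯 = 0 :=
  coeff_zero_X_mul _

theorem coeff_succ_shiftedCatalanSeries (n : ℕ) : coeff (n + 1) 𝒯 = catalan n := by
  rw [shiftedCatalanSeries, coeff_succ_X_mul, catalanSeries_coeff]

theorem shiftedCatalanSeries_eq_X_add_sq : 𝒯 = X + 𝒯 ^ 2 := by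
  conv_lhs => rw [shiftedCatalanSeries, ← catalanSeries_sq_mul_X_add_one]
  rw [shiftedCatalanSeries]
  ring

theorem coeff_succ_shiftedCatalanSeries_pow_succ (m d : ℕ) :
    coeff (d + 1) (𝒯 ^ (m + 1)) = coeff d (𝒯 ^ m) + coeff (d + 1) (𝒯 ^ (m + 2)) := by
  rw [pow_succ]
  nth_rewrite 2 [shiftedCatalanSeries_eq_X_add_sq]
  rw [mul_add, map_add, coeff_succ_mul_X, ← pow_add]

theorem coeff_succ_shiftedCatalanSeries_mul_succ {k : ℕ} (hk : k ≠ 0) :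
    coeff (k + 1) 𝒯 * (k + 1) =
      2 * ∑ p ∈ antidiagonal k, coeff (p.1 + 1) 𝒯 * (p.1 + 1) * coeff p.2 𝒯 := by
  have h := congrArg (fun f => coeff k (d⁄dX ℕ f)) shiftedCatalanSeries_eq_X_add_sq
  simp only [map_add, derivative_X, sq, Derivation.leibniz, smul_eq_mul, coeff_one, if_neg hk,
    coeff_derivative, Nat.cast_id, mul_comm shiftedCatalanSeries, coeff_mul] at h
  rw [h, zero_add, two_mul]

theorem tree_recurrence_coeff_shiftedCatalanSeries {k : ℕ} (hk : k ≠ 0) :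
    ∑ i ∈ range (k + 1),
        k.choose i * ((2 * (i + 1)! * coeff (i + 1) 𝒯) * (2 * (k - i)! * coeff (k - i) 𝒯)) =
      2 * (k + 1)! * coeff (k + 1) 𝒯 := by
  have hrhs : 2 * (k + 1)! * coeff (k + 1) 𝒯 = 2 * k ! * (coeff (k + 1) 𝒯 * (k + 1)) := by
    rw [factorial_succ]; ring
  rw [← Finset.Nat.sum_antidiagonal_eq_sum_range_succ (fun i j : ℕ =>
      k.choose i * ((2 * (i + 1)! * coeff (i + 1) 𝒯) * (2 * j ! * coeff j 𝒯))),
    hrhs, coeff_succ_shiftedCatalanSeries_mul_succ hk, mul_sum, mul_sum]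
  refine sum_congr rfl fun p hp => ?_
  rw [← choose_mul_factorial_mul_factorial_of_mem_antidiagonal hp, factorial_succ]
  ring

theorem forest_recurrence_coeff_shiftedCatalanSeries_pow (m n : ℕ) :
    ∑ j ∈ range (n + 1), n.choose j *
        ((2 * j ! * coeff j 𝒯) * ((n - j)! * 2 ^ m * coeff (n - j) (𝒯 ^ m))) =
      n ! * 2 ^ (m + 1) * coeff n (𝒯 ^ (m + 1)) := by
  rw [← Finset.Nat.sum_antidiagonal_eq_sum_range_succ (fun i j : ℕ =>
      n.choose i * ((2 * i ! * coeff i 𝒯) * (j ! * 2 ^ m * coeff j (𝒯 ^ m)))),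
    pow_succ' 𝒯, coeff_mul, mul_sum]
  refine sum_congr rfl fun p hp => ?_
  rw [← choose_mul_factorial_mul_factorial_of_mem_antidiagonal hp]
  ring

theorem catalan_mul_factorial_mul_factorial (d : ℕ) :
    catalan d * ((d + 1)! * d !) = (2 * d)! := by
  rw [two_mul, ← add_choose_mul_factorial_mul_factorial d d, ← two_mul,
    ← centralBinom_eq_two_mul_choose, ← succ_mul_catalan_eq_centralBinom, factorial_succ]
  ring

-- The factor `2 * d + m` makes the identity hold for `m = 0` too, where the induction starts.
theorem coeff_shiftedCatalanSeries_pow_mul (m d : ℕ) :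
    coeff (m + d) (𝒯 ^ m) * ((m + d)! * d !) * (2 * d + m) = m * (2 * d + m)! := by
  induction m using Nat.twoStepInduction generalizing d with
  | zero => cases d <;> simp [coeff_one]
  | one =>
    rw [pow_one, add_comm, coeff_succ_shiftedCatalanSeries, catalan_mul_factorial_mul_factorial,
      factorial_succ (2 * d), one_mul, mul_comm]
  | more m ih₀ ih₁ =>
    have hrec := coeff_succ_shiftedCatalanSeries_pow_succ m (m + 1 + d)
    have h₀ := ih₀ (d + 1)
    rw [show m + (d + 1) = m + 1 + d by omega, show 2 * (d + 1) + m = 2 * d + m + 2 by omega,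
      factorial_succ d] at h₀
    have h₁ := ih₁ (d + 1)
    rw [show m + 1 + (d + 1) = m + 1 + d + 1 by omega,
      show 2 * (d + 1) + (m + 1) = 2 * d + m + 2 + 1 by omega, factorial_succ (m + 1 + d),
      factorial_succ d, factorial_succ (2 * d + m + 2)] at h₁
    rw [show m + 2 + d = m + 1 + d + 1 by omega, show 2 * d + (m + 2) = 2 * d + m + 2 by omega,
      factorial_succ (m + 1 + d)]
    refine Nat.eq_of_mul_eq_mul_left (show 0 < (d + 1) * (2 * d + m + 3) by positivity) ?_
    rw [hrec] at h₁
    zify at h₀ h₁ ⊢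
    linear_combination (2 * (d : ℤ) + m + 2) * h₁ - ((m : ℤ) + d + 2) * (2 * d + m + 3) * h₀

namespace BTree

def minLeaf : BTree → ℕ
  | leaf i => i
  | node l r => min l.minLeaf r.minLeaf

def normalize : BTree → BTree
  | leaf i => leaf i
  | node l r =>
    if l.minLeaf ≤ r.minLeaf then node l.normalize r.normalize else node r.normalize l.normalize

theorem minLeaf_mem_leaves : ∀ t : BTree, t.minLeaf ∈ t.leaves
  | leaf i => Multiset.mem_singleton_self i
  | node l r => by
    rcases le_total l.minLeaf r.minLeaf with h | h
    · simpa [minLeaf, leaves, min_eq_left h] using Or.inl (minLeaf_mem_leaves l)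
    · simpa [minLeaf, leaves, min_eq_right h] using Or.inr (minLeaf_mem_leaves r)

theorem minLeaf_le : ∀ (t : BTree), ∀ x ∈ t.leaves, t.minLeaf ≤ x
  | leaf i => by simp [minLeaf, leaves]
  | node l r => by
    intro x hx
    rcases Multiset.mem_add.1 hx with hx | hx
    · exact (min_le_left _ _).trans (minLeaf_le l x hx)
    · exact (min_le_right _ _).trans (minLeaf_le r x hx)

theorem minLeaf_eq_of_mem_of_forall_le {t : BTree} {x : ℕ} (hx : x ∈ t.leaves)
    (h : ∀ y ∈ t.leaves, x ≤ y) : t.minLeaf = x :=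
  le_antisymm (t.minLeaf_le x hx) (h _ t.minLeaf_mem_leaves)

theorem minLeaf_eq_of_leaves_eq {a b : BTree} (h : a.leaves = b.leaves) :
    a.minLeaf = b.minLeaf :=
  minLeaf_eq_of_mem_of_forall_le (h ▸ b.minLeaf_mem_leaves) fun y hy => b.minLeaf_le y (h ▸ hy)

theorem leaves_ne_zero (t : BTree) : t.leaves ≠ 0 :=
  fun h => by simpa [h] using t.minLeaf_mem_leaves

theorem leaves_normalize : ∀ t : BTree, t.normalize.leaves = t.leaves
  | leaf i => rfl
  | node l r => by
    by_cases h : l.minLeaf ≤ r.minLeaf <;>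
      simp [normalize, h, leaves, leaves_normalize l, leaves_normalize r, add_comm]

theorem minLeaf_normalize (t : BTree) : t.normalize.minLeaf = t.minLeaf :=
  minLeaf_eq_of_leaves_eq t.leaves_normalize

theorem normalize_normalize : ∀ t : BTree, t.normalize.normalize = t.normalize
  | leaf i => rfl
  | node l r => by
    rcases le_or_gt l.minLeaf r.minLeaf with h | h
    · simp [normalize, h, minLeaf_normalize, normalize_normalize l, normalize_normalize r]
    · simp [normalize, not_le.2 h, minLeaf_normalize, h.le, normalize_normalize l,
        normalize_normalize r]

theorem iso_normalize : ∀ t : BTree, Iso t t.normalize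
  | leaf i => Iso.leaf i
  | node l r => by
    by_cases h : l.minLeaf ≤ r.minLeaf
    · simpa [normalize, h] using Iso.node (iso_normalize l) (iso_normalize r)
    · simpa [normalize, h] using Iso.swap (iso_normalize l) (iso_normalize r)

theorem Iso.symm {a b : BTree} (h : Iso a b) : Iso b a := by
  induction h with
  | leaf i => exact Iso.leaf i
  | node _ _ ih₁ ih₂ => exact Iso.node ih₁ ih₂
  | swap _ _ ih₁ ih₂ => exact Iso.swap ih₂ ih₁

theorem Iso.leaves_eq {a b : BTree} (h : Iso a b) : a.leaves = b.leaves := by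
  induction h with
  | leaf i => rfl
  | node _ _ ih₁ ih₂ => simp [leaves, ih₁, ih₂]
  | swap _ _ ih₁ ih₂ => simp [leaves, ih₁, ih₂, add_comm]

theorem normalize_eq_of_iso {a b : BTree} (h : Iso a b) (hnd : a.leaves.Nodup) :
    a.normalize = b.normalize := by
  induction h with
  | leaf i => rfl
  | node h₁ h₂ ih₁ ih₂ =>
    rw [leaves, Multiset.nodup_add] at hnd
    simp only [normalize, ih₁ hnd.1, ih₂ hnd.2.1, minLeaf_eq_of_leaves_eq h₁.leaves_eq,
      minLeaf_eq_of_leaves_eq h₂.leaves_eq]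
  | @swap l r l' r' h₁ h₂ ih₁ ih₂ =>
    rw [leaves, Multiset.nodup_add] at hnd
    have hne : l.minLeaf ≠ r.minLeaf := fun heq =>
      Multiset.disjoint_left.mp hnd.2.2 l.minLeaf_mem_leaves (heq ▸ r.minLeaf_mem_leaves)
    have e₁ := minLeaf_eq_of_leaves_eq h₁.leaves_eq
    have e₂ := minLeaf_eq_of_leaves_eq h₂.leaves_eq
    rcases hne.lt_or_gt with h | h
    · simp only [normalize, if_pos h.le, ← e₁, ← e₂, if_neg (not_le.2 h), ih₁ hnd.1, ih₂ hnd.2.1]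
    · simp only [normalize, if_neg (not_le.2 h), ← e₁, ← e₂, if_pos h.le, ih₁ hnd.1, ih₂ hnd.2.1]

theorem normalize_node_eq_self_iff {l r : BTree} :
    (node l r).normalize = node l r ↔
      l.normalize = l ∧ r.normalize = r ∧ l.minLeaf ≤ r.minLeaf := by
  by_cases hc : l.minLeaf ≤ r.minLeaf
  · simp [normalize, hc]
  · rw [normalize, if_neg hc, node.injEq]
    refine iff_of_false (fun h => hc ?_) fun h => hc h.2.2
    rw [← h.1, minLeaf_normalize]
end BTree

open BTree

def CanonTree (s : Finset ℕ) : Type :=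
  {t : BTree // t.leaves = s.val ∧ t.normalize = t}

def CanonForest (m : ℕ) (s : Finset ℕ) : Type :=
  {f : Fin m → BTree // ∑ i, (f i).leaves = s.val ∧ ∀ i, (f i).normalize = f i}

def PhyloForest.equivCanonForest (m n : ℕ) : PhyloForest m n ≃ CanonForest m (Icc 1 n) where
  toFun := Quot.lift
    (fun f => ⟨fun i => (f.1 i).normalize, by simpa only [leaves_normalize] using f.2,
      fun i => normalize_normalize _⟩)
    fun f g h => Subtype.ext <| funext fun i => normalize_eq_of_iso (h i) <| by
      have hle : (f.1 i).leaves ≤ ∑ j, (f.1 j).leaves :=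
        single_le_sum (f := fun j => (f.1 j).leaves) (fun j _ => Multiset.zero_le _) (mem_univ i)
      exact Multiset.nodup_of_le (hle.trans_eq f.2) (Icc 1 n).nodup
  invFun f := Quot.mk _ ⟨f.1, f.2.1⟩
  left_inv := Quot.ind fun f => Quot.sound fun i => (iso_normalize _).symm
  right_inv f := Subtype.ext <| funext f.2.2

namespace CanonTree

instance : IsEmpty (CanonTree ∅) :=
  ⟨fun t => t.1.leaves_ne_zero t.2.1⟩

instance (i : ℕ) : Unique (CanonTree {i}) where
  default := ⟨leaf i, rfl, rfl⟩
  uniq := by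
    rintro ⟨(j | ⟨l, r⟩), ht, _⟩
    · obtain rfl : j = i := by simpa [leaves] using ht
      rfl
    · have hcard : Multiset.card (node l r).leaves = 1 := by rw [ht]; rfl
      have := Multiset.card_pos.2 l.leaves_ne_zero
      have := Multiset.card_pos.2 r.leaves_ne_zero
      rw [leaves, Multiset.card_add] at hcard
      omega

variable {s : Finset ℕ} {x : ℕ}

def join (hmin : ∀ y ∈ s, x ≤ y) :
    (Σ A : s.powerset.filter (x ∈ ·), CanonTree A × CanonTree (s \ A)) → CanonTree s
  | ⟨⟨A, hA⟩, ⟨l, hl, hln⟩, ⟨r, hr, hrn⟩⟩ => ⟨node l r, by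
      rw [leaves, hl, hr, sdiff_val,
        add_tsub_cancel_of_le (val_le_iff.2 (mem_powerset.1 (mem_filter.1 hA).1))], by
      refine normalize_node_eq_self_iff.2 ⟨hln, hrn, ?_⟩
      have hr' : r.minLeaf ∈ (s \ A).val := hr ▸ minLeaf_mem_leaves r
      exact (minLeaf_le l x (hl ▸ (mem_filter.1 hA).2)).trans (hmin _ (mem_sdiff.1 hr').1)⟩

theorem join_bijective (hx : x ∈ s) (hmin : ∀ y ∈ s, x ≤ y) (hs : 2 ≤ #s) :
    Function.Bijective (join hmin) := by
  constructor
  · rintro ⟨⟨A, _⟩, ⟨l, hl, _⟩, ⟨r, _, _⟩⟩ ⟨⟨A', _⟩, ⟨l', hl', _⟩, ⟨r', _, _⟩⟩ h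
    simp only [join] at h
    obtain ⟨rfl, rfl⟩ := h
    obtain rfl : A = A' := val_inj.1 (hl.symm.trans hl')
    rfl
  · rintro ⟨(i | ⟨l, r⟩), ht, hn⟩
    · have : #s = 1 := by rw [card_def, ← ht]; rfl
      omega
    obtain ⟨hln, hrn, hle⟩ := normalize_node_eq_self_iff.1 hn
    obtain ⟨A, hAs, hl, hr⟩ := exists_subset_eq_val_of_add_eq_val ht
    have hxA : x ∈ A := by
      have hroot : (node l r).minLeaf = x :=
        minLeaf_eq_of_mem_of_forall_le (ht ▸ hx) fun y hy => hmin y (by rw [ht] at hy; exact hy)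
      rw [minLeaf, min_eq_left hle] at hroot
      rw [← mem_val, ← hl, ← hroot]
      exact minLeaf_mem_leaves l
    exact ⟨⟨⟨A, mem_filter.2 ⟨mem_powerset.2 hAs, hxA⟩⟩, ⟨l, hl, hln⟩, ⟨r, hr, hrn⟩⟩, rfl⟩

end CanonTree

theorem finite_and_card_mul_eq_sum {ι γ : Type*} {S : Finset ι} {β : ι → Type*}
    (e : (Σ A : S, β A) ≃ γ) {c : ℕ} {g : ι → ℕ}
    (h : ∀ A ∈ S, Finite (β A) ∧ Nat.card (β A) * c = g A) :
    Finite γ ∧ Nat.card γ * c = ∑ A ∈ S, g A := by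
  have := fun A : S => (h A A.2).1
  refine ⟨Finite.of_equiv _ e, ?_⟩
  rw [← Nat.card_congr e, Nat.card_sigma, sum_mul, ← sum_coe_sort S g]
  exact sum_congr rfl fun A _ => (h A A.2).2

theorem card_prod_mul_two_pow {α β : Type*} {A s : Finset ℕ} (hA : A ⊆ s) {a b : ℕ}
    (ha : Nat.card α * 2 ^ #A = a) (hb : Nat.card β * 2 ^ (#s - #A) = b) :
    Nat.card (α × β) * 2 ^ #s = a * b := by
  rw [← ha, ← hb, Nat.card_prod, mul_mul_mul_comm, ← pow_add,
    Nat.add_sub_cancel' (card_le_card hA)]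

theorem CanonTree.finite_and_card_mul_two_pow_of_card_le_one {s : Finset ℕ} (hs : #s ≤ 1) :
    Finite (CanonTree s) ∧ Nat.card (CanonTree s) * 2 ^ #s = 2 * (#s)! * coeff #s 𝒯 := by
  obtain ⟨i, hi⟩ := card_le_one_iff_subset_singleton.1 hs
  obtain rfl | rfl := subset_singleton_iff.1 hi
  · refine ⟨inferInstance, ?_⟩
    rw [Nat.card_of_isEmpty, card_empty, coeff_zero_shiftedCatalanSeries, zero_mul, mul_zero]
  · refine ⟨inferInstance, ?_⟩
    rw [Nat.card_unique, card_singleton, coeff_succ_shiftedCatalanSeries 0, catalan_zero]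
    rfl

theorem CanonTree.finite_and_card_mul_two_pow (s : Finset ℕ) :
    Finite (CanonTree s) ∧ Nat.card (CanonTree s) * 2 ^ #s = 2 * (#s)! * coeff #s 𝒯 := by
  induction s using Finset.strongInduction with
  | H s ih =>
  rcases le_or_gt #s 1 with hs | hs
  · exact CanonTree.finite_and_card_mul_two_pow_of_card_le_one hs
  have hne : s.Nonempty := card_pos.1 (by omega)
  set x := s.min' hne
  have hx : x ∈ s := s.min'_mem hne
  have hfib : ∀ A ∈ s.powerset.filter (x ∈ ·),
      Finite (CanonTree A × CanonTree (s \ A)) ∧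
        Nat.card (CanonTree A × CanonTree (s \ A)) * 2 ^ #s =
          (2 * (#A)! * coeff #A 𝒯) * (2 * (#s - #A)! * coeff (#s - #A) 𝒯) := by
    intro A hA
    obtain ⟨hAs, hxA⟩ := mem_filter.1 hA
    rw [mem_powerset] at hAs
    rcases hAs.eq_or_ssubset with rfl | hAs'
    · rw [sdiff_self, bot_eq_empty]
      refine ⟨inferInstance, ?_⟩
      rw [Nat.card_of_isEmpty, Nat.sub_self, coeff_zero_shiftedCatalanSeries, zero_mul, mul_zero,
        mul_zero]
    obtain ⟨hfin₁, hcard₁⟩ := ih A hAs'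
    obtain ⟨hfin₂, hcard₂⟩ := ih (s \ A) (sdiff_ssubset hAs ⟨x, hxA⟩)
    rw [card_sdiff_of_subset hAs] at hcard₂
    exact ⟨inferInstance, card_prod_mul_two_pow hAs hcard₁ hcard₂⟩
  obtain ⟨hfin, hcard⟩ := finite_and_card_mul_eq_sum
    (Equiv.ofBijective _ (CanonTree.join_bijective hx (fun y hy => s.min'_le y hy) hs)) hfib
  refine ⟨hfin, ?_⟩
  obtain ⟨k, hk⟩ : ∃ k, #s = k + 1 := ⟨#s - 1, by omega⟩
  rw [hcard,
    sum_powerset_filter_mem hx fun j => (2 * j ! * coeff j 𝒯) * (2 * (#s - j)! * coeff (#s - j) 𝒯),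
    sum_powerset_apply_card fun j =>
      (2 * (j + 1)! * coeff (j + 1) 𝒯) * (2 * (#s - (j + 1))! * coeff (#s - (j + 1)) 𝒯),
    card_erase_of_mem hx, hk, Nat.add_sub_cancel]
  simp only [smul_eq_mul, Nat.add_sub_add_right]
  exact tree_recurrence_coeff_shiftedCatalanSeries (by omega)

namespace CanonForest

variable {m : ℕ} {s : Finset ℕ}

instance : Unique (CanonForest 0 ∅) where
  default := ⟨Fin.elim0, by simp, fun i => i.elim0⟩
  uniq f := Subtype.ext (funext fun i => i.elim0)

theorem isEmpty_zero (hs : s.Nonempty) : IsEmpty (CanonForest 0 s) :=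
  ⟨fun f => hs.ne_empty (val_eq_zero.1 (by simpa using f.2.1.symm))⟩

def cons : (Σ A : s.powerset, CanonTree A × CanonForest m (s \ A)) → CanonForest (m + 1) s
  | ⟨⟨A, hA⟩, ⟨t, ht, htn⟩, ⟨f, hf, hfn⟩⟩ => ⟨Fin.cons t f, by
      rw [Fin.sum_univ_succ]
      simp only [Fin.cons_zero, Fin.cons_succ]
      rw [ht, hf, sdiff_val, add_tsub_cancel_of_le (val_le_iff.2 (mem_powerset.1 hA))],
    Fin.cases htn hfn⟩

theorem cons_bijective : Function.Bijective (cons (m := m) (s := s)) := by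
  constructor
  · rintro ⟨⟨A, _⟩, ⟨t, ht, _⟩, ⟨f, _, _⟩⟩ ⟨⟨A', _⟩, ⟨t', ht', _⟩, ⟨f', _, _⟩⟩ h
    have h' : (Fin.cons t f : Fin (m + 1) → BTree) = Fin.cons t' f' := congrArg Subtype.val h
    obtain ⟨rfl, rfl⟩ := Fin.cons_injective2 h'
    obtain rfl : A = A' := val_inj.1 (ht.symm.trans ht')
    rfl
  · rintro ⟨f, hf, hn⟩
    rw [Fin.sum_univ_succ] at hf
    obtain ⟨A, hAs, h₀, htail⟩ := exists_subset_eq_val_of_add_eq_val hf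
    exact ⟨⟨⟨A, mem_powerset.2 hAs⟩, ⟨f 0, h₀, hn 0⟩, ⟨Fin.tail f, htail, fun i => hn _⟩⟩,
      Subtype.ext (Fin.cons_self_tail f)⟩

theorem finite_and_card_mul_two_pow (m : ℕ) (s : Finset ℕ) :
    Finite (CanonForest m s) ∧
      Nat.card (CanonForest m s) * 2 ^ #s = (#s)! * 2 ^ m * coeff #s (𝒯 ^ m) := by
  induction m generalizing s with
  | zero =>
    obtain rfl | hs := s.eq_empty_or_nonempty
    · exact ⟨inferInstance, by simp⟩
    · have := isEmpty_zero hs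
      exact ⟨inferInstance, by simp [coeff_one, hs.ne_empty]⟩
  | succ m ih =>
    have hfib : ∀ A ∈ s.powerset,
        Finite (CanonTree A × CanonForest m (s \ A)) ∧
          Nat.card (CanonTree A × CanonForest m (s \ A)) * 2 ^ #s =
            (2 * (#A)! * coeff #A 𝒯) * ((#s - #A)! * 2 ^ m * coeff (#s - #A) (𝒯 ^ m)) := by
      intro A hA
      rw [mem_powerset] at hA
      obtain ⟨hfin₁, hcard₁⟩ := CanonTree.finite_and_card_mul_two_pow A
      obtain ⟨hfin₂, hcard₂⟩ := ih (s \ A)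
      rw [card_sdiff_of_subset hA] at hcard₂
      exact ⟨inferInstance, card_prod_mul_two_pow hA hcard₁ hcard₂⟩
    obtain ⟨hfin, hcard⟩ := finite_and_card_mul_eq_sum (Equiv.ofBijective _ cons_bijective) hfib
    refine ⟨hfin, ?_⟩
    rw [hcard, sum_powerset_apply_card fun j =>
      (2 * j ! * coeff j 𝒯) * ((#s - j)! * 2 ^ m * coeff (#s - j) (𝒯 ^ m))]
    simp only [smul_eq_mul]
    exact forest_recurrence_coeff_shiftedCatalanSeries_pow m #s

end CanonForest

theorem card_phyloForest_mul_two_pow (m n : ℕ) :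
    Nat.card (PhyloForest m n) * 2 ^ n = n ! * 2 ^ m * coeff n (𝒯 ^ m) := by
  simpa [Nat.card_congr (PhyloForest.equivCanonForest m n)] using
    (CanonForest.finite_and_card_mul_two_pow m (Icc 1 n)).2

theorem card_phyloForest_add_mul {m : ℕ} (hm : 1 ≤ m) (d : ℕ) :
    Nat.card (PhyloForest m (m + d)) * (d ! * 2 ^ d) = (2 * d + m - 1)! * m := by
  obtain ⟨e, rfl⟩ : ∃ e, m = e + 1 := ⟨m - 1, by omega⟩
  have h₁ := card_phyloForest_mul_two_pow (e + 1) (e + 1 + d)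
  have h₂ := coeff_shiftedCatalanSeries_pow_mul (e + 1) d
  rw [pow_add] at h₁
  rw [show 2 * d + (e + 1) = 2 * d + e + 1 by omega, factorial_succ] at h₂
  rw [show 2 * d + (e + 1) - 1 = 2 * d + e by omega]
  refine Nat.eq_of_mul_eq_mul_left (show 0 < 2 ^ (e + 1) * (2 * d + e + 1) by positivity) ?_
  zify at h₁ h₂ ⊢
  linear_combination (d ! * (2 * d + e + 1) : ℤ) * h₁ + (2 ^ (e + 1) : ℤ) * h₂

/-- the number of ordered m-forests on n labeled leaves equals
(2n-m-1)!·m/((n-m)!·2^(n-m)) for n > m ≥ 1, and m! for n = m. -/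
theorem stmt1 (m : ℕ) (hm : 1 ≤ m) :
    Nat.card (PhyloForest m m) = Nat.factorial m ∧
    ∀ n : ℕ, m < n →
      Nat.card (PhyloForest m n) * (Nat.factorial (n - m) * 2 ^ (n - m)) =
        Nat.factorial (2 * n - m - 1) * m := by
  constructor
  · have h := card_phyloForest_add_mul hm 0
    rw [add_zero, factorial_zero, pow_zero, mul_one, mul_one, mul_zero, zero_add, mul_comm,
      mul_factorial_pred (by omega)] at h
    exact h
  · intro n hn
    obtain ⟨d, rfl⟩ := Nat.exists_eq_add_of_le hn.le
    rw [Nat.add_sub_cancel_left, show 2 * (m + d) - m - 1 = 2 * d + m - 1 by omega]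
    exact card_phyloForest_add_mul hm d
end

section
/- For every integer n ≥ 2, the sum over k from 0 to n of ((n-1)_k · (2-n)_k)/((-n)_k · k!) · (1/2)^k equals 2^(n-1)/n, where (a)_k = a(a+1)···(a+k-1) is the rising factorial. (Equivalently, the hypergeometric value ₂F₁(n-1, 2-n; -n; 1/2) = 2^(n-1)/n.) -/
/-!
Put `n = m + 2`. Since `2 - n = -m` and `-n = -(m + 2)` are negative integers, the Pochhammer
symbols are ratios of factorials and the `k`-th term is
`F(m, k) = (m+2-k)(m+1-k)(m+k)! / ((m+2)! k! 2^k)`.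
With the WZ mate `G` one has `(m+3) F(m+1, k) - 2(m+2) F(m, k) = G(m, k+1) - G(m, k)`;
summing over `k` telescopes to `(m+3) S(m+1) = 2(m+2) S(m)` for `S(m) = ∑ₖ F(m, k)`,
and `S(0) = 1`.
-/

open Finset Nat

lemma rf_eq_ascPochhammer_eval (a : ℝ) (k : ℕ) : rf a k = (ascPochhammer ℝ k).eval a := by
  induction k with
  | zero => simp [rf]
  | succ k ih => rw [rf, ih, ascPochhammer_succ_eval]

lemma rf_natCast_add_one (m k : ℕ) : rf ((m : ℝ) + 1) k = (m + k)! / m ! := by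
  rw [eq_div_iff (by positivity), rf_eq_ascPochhammer_eval, ← Nat.cast_add_one,
    ascPochhammer_nat_eq_natCast_ascFactorial, mul_comm]
  exact_mod_cast factorial_mul_ascFactorial m k

lemma rf_neg_natCast_add (d k : ℕ) :
    rf (-((d + k : ℕ) : ℝ)) k = (-1) ^ k * (d + k)! / d ! := by
  have h := factorial_mul_descFactorial (n := d + k) (k := k) le_add_self
  rw [Nat.add_sub_cancel] at h
  rw [eq_div_iff (by positivity), rf_eq_ascPochhammer_eval,
    ascPochhammer_eval_neg_eq_descPochhammer, descPochhammer_eval_eq_descFactorial, ← h]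
  push_cast
  ring

noncomputable def wzF (m k : ℕ) : ℝ :=
  ((m : ℝ) + 2 - k) * ((m : ℝ) + 1 - k) * (m + k)! / ((m + 2)! * k ! * 2 ^ k)

/- `wzG = R * wzF` for the rational certificate `R = -2k(m+3-k)/(m+1-k)` found by Zeilberger's
algorithm. -/
noncomputable def wzG (m k : ℕ) : ℝ :=
  -2 * k * ((m : ℝ) + 2 - k) * ((m : ℝ) + 3 - k) * (m + k)! / ((m + 2)! * k ! * 2 ^ k)

lemma wzF_recurrence (m k : ℕ) :
    ((m : ℝ) + 3) * wzF (m + 1) k = 2 * ((m : ℝ) + 2) * wzF m k + wzG m (k + 1) - wzG m k := by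
  rw [wzF, wzF, wzG, wzG, show m + 1 + k = m + k + 1 by ring, show m + (k + 1) = m + k + 1 by ring]
  simp only [factorial_succ]
  push_cast
  field_simp
  ring

lemma sum_wzF (m : ℕ) : ∑ k ∈ range (m + 1), wzF m k = 2 ^ (m + 1) / ((m : ℝ) + 2) := by
  induction m with
  | zero => norm_num [wzF]
  | succ m ih =>
    have hF : wzF m (m + 1) = 0 := by simp [wzF]
    have hG : wzG m (m + 2) - wzG m 0 = 0 := by simp [wzG]
    have htel : ((m : ℝ) + 3) * ∑ k ∈ range (m + 2), wzF (m + 1) k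
        = 2 * ((m : ℝ) + 2) * ∑ k ∈ range (m + 2), wzF m k := by
      rw [mul_sum, mul_sum, ← sub_eq_zero, ← sum_sub_distrib, ← hG, ← sum_range_sub]
      exact sum_congr rfl fun k _ => by rw [wzF_recurrence]; ring
    rw [sum_range_succ (wzF m), hF, add_zero, ih] at htel
    rw [Nat.cast_succ, show (m : ℝ) + 1 + 2 = m + 3 by ring, eq_div_iff (by positivity), mul_comm,
      htel]
    field_simp
    ring

lemma rf_summand_eq_wzF (m k : ℕ) (hk : k ≤ m) :
    rf (((m + 2 : ℕ) : ℝ) - 1) k * rf (2 - ((m + 2 : ℕ) : ℝ)) k /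
      (rf (-((m + 2 : ℕ) : ℝ)) k * (k ! : ℝ)) * (1 / 2) ^ k = wzF m k := by
  obtain ⟨d, rfl⟩ : ∃ d, m = d + k := ⟨m - k, by omega⟩
  have ha : ((d + k + 2 : ℕ) : ℝ) - 1 = (d + k : ℕ) + 1 := by push_cast; ring
  have hb : (2 : ℝ) - ((d + k + 2 : ℕ) : ℝ) = -((d + k : ℕ) : ℝ) := by push_cast; ring
  rw [ha, hb, show d + k + 2 = d + 2 + k by ring, rf_natCast_add_one, rf_neg_natCast_add,
    rf_neg_natCast_add, show d + 2 + k = d + k + 2 by ring, wzF, one_div, inv_pow]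
  simp only [factorial_succ]
  push_cast
  field_simp
  ring

/-- the terminating hypergeometric evaluation
₂F₁(n-1, 2-n; -n; 1/2) = 2^(n-1)/n. -/
theorem stmt2 (n : ℕ) (hn : 2 ≤ n) :
    ∑ k ∈ Finset.range (n - 1),
        rf ((n : ℝ) - 1) k * rf (2 - (n : ℝ)) k /
          (rf (-(n : ℝ)) k * (Nat.factorial k : ℝ)) * (1 / 2) ^ k
      = 2 ^ (n - 1) / (n : ℝ) := by
  obtain ⟨m, rfl⟩ : ∃ m, n = m + 2 := ⟨n - 2, by omega⟩
  rw [show m + 2 - 1 = m + 1 by omega,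
    sum_congr rfl fun k hk => rf_summand_eq_wzF m k (Nat.lt_succ_iff.mp (mem_range.mp hk)), sum_wzF]
  push_cast
  ring
end

section
/- For all real numbers a, b with a ≠ 1, b ≠ 1, 2a not a nonpositive integer, and b+1/2 not a nonpositive integer (so that all terms are defined and both series converge), the identity ₄F₃(1, a, a+1/2, b; 2, 2a, b+1/2; 1) = ((2b-1)/((a-1)(b-1))) · (-1 + ₃F₂(a-1, a-1/2, b-1; 2a-1, b-1/2; 1)) holds, where ₚF_q denotes the generalized hypergeometric series with argument 1. -/
/-! The proof shifts the summation index: the term of index `k + 1` of `ₚF_q(a; b; z)` is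
`z · ∏ a / ∏ b` times the term of index `k` of `ₚ₊₁F_q₊₁(1, a + 1; 2, b + 1; z)`, because
`(x)_{k+1} = x · (x + 1)_k` and `(k + 1)! = (2)_k · k! / (1)_k`. For the parameters of the
theorem, `∏ a / ∏ b = (a - 1)(b - 1) / (2b - 1)`. -/

open scoped Nat

theorem rf_succ_eq_mul_rf_add_one (x : ℝ) (k : ℕ) : rf x (k + 1) = x * rf (x + 1) k := by
  induction k with
  | zero => simp [rf]
  | succ n ih =>
    change rf x (n + 1) * (x + (n + 1 : ℕ)) = x * (rf (x + 1) n * (x + 1 + n))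
    rw [ih]
    push_cast
    ring

theorem rf_one_eq_factorial (k : ℕ) : rf 1 k = k ! := by
  induction k with
  | zero => simp [rf]
  | succ n ih =>
    change rf 1 n * (1 + n) = _
    rw [ih, Nat.factorial_succ]
    push_cast
    ring

theorem rf_two_eq_factorial_succ (k : ℕ) : rf 2 k = (k + 1)! := by
  rw [← rf_one_eq_factorial, rf_succ_eq_mul_rf_add_one, one_add_one_eq_two, one_mul]

noncomputable def hypergeometricTerm (as bs : List ℝ) (z : ℝ) (k : ℕ) : ℝ :=
  (as.map (rf · k)).prod * z ^ k / ((bs.map (rf · k)).prod * k !)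

noncomputable def hypergeometric (as bs : List ℝ) (z : ℝ) : ℝ :=
  ∑' k, hypergeometricTerm as bs z k

theorem hypergeometricTerm_zero (as bs : List ℝ) (z : ℝ) : hypergeometricTerm as bs z 0 = 1 := by
  simp [hypergeometricTerm, rf]

theorem prod_map_rf_succ (l : List ℝ) (k : ℕ) :
    (l.map (rf · (k + 1))).prod = l.prod * (l.map (fun x => rf (x + 1) k)).prod := by
  simp only [rf_succ_eq_mul_rf_add_one, List.prod_map_mul, List.map_id']

theorem hypergeometricTerm_succ (as bs : List ℝ) (z : ℝ) (k : ℕ) :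
    hypergeometricTerm as bs z (k + 1) =
      z * as.prod / bs.prod *
        hypergeometricTerm (1 :: as.map (· + 1)) (2 :: bs.map (· + 1)) z k := by
  have hk : (k ! : ℝ) ≠ 0 := by positivity
  simp only [hypergeometricTerm, List.map_cons, List.prod_cons, List.map_map, Function.comp_def,
    prod_map_rf_succ, rf_one_eq_factorial, rf_two_eq_factorial_succ]
  field_simp
  ring

theorem hypergeometric_eq_one_add (as bs : List ℝ) (z : ℝ)
    (h : Summable (hypergeometricTerm as bs z)) :
    hypergeometric as bs z =
      1 + z * as.prod / bs.prod *
        hypergeometric (1 :: as.map (· + 1)) (2 :: bs.map (· + 1)) z := by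
  rw [hypergeometric, h.tsum_eq_zero_add, hypergeometricTerm_zero]
  simp only [hypergeometricTerm_succ, tsum_mul_left, hypergeometric]

theorem hypergeometric_three_two_eq_one_add (a b z : ℝ) (h2a : 2 * a - 1 ≠ 0)
    (hb : b - 1 / 2 ≠ 0)
    (h : Summable (hypergeometricTerm [a - 1, a - 1 / 2, b - 1] [2 * a - 1, b - 1 / 2] z)) :
    hypergeometric [a - 1, a - 1 / 2, b - 1] [2 * a - 1, b - 1 / 2] z =
      1 + z * ((a - 1) * (b - 1) / (2 * b - 1)) *
        hypergeometric [1, a, a + 1 / 2, b] [2, 2 * a, b + 1 / 2] z := by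
  have hratio : [a - 1, a - 1 / 2, b - 1].prod / [2 * a - 1, b - 1 / 2].prod =
      (a - 1) * (b - 1) / (2 * b - 1) := by
    have h2b : 2 * b - 1 ≠ 0 := by contrapose! hb; linarith
    simp only [List.prod_cons, List.prod_nil, mul_one]
    rw [div_eq_div_iff (mul_ne_zero h2a hb) h2b]
    ring
  have hnum : [a - 1, a - 1 / 2, b - 1].map (· + 1) = [a, a + 1 / 2, b] := by
    simp only [List.map_cons, List.map_nil]; ring_nf
  have hden : [2 * a - 1, b - 1 / 2].map (· + 1) = [2 * a, b + 1 / 2] := by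
    simp only [List.map_cons, List.map_nil]; ring_nf
  rw [hypergeometric_eq_one_add _ _ _ h, mul_div_assoc, hratio, hnum, hden]

theorem stmt4_general (a b : ℝ) (ha : a ≠ 1) (hb : b ≠ 1)
    (h2a' : ∀ k : ℕ, rf (2 * a - 1) k ≠ 0)
    (hb2' : ∀ k : ℕ, rf (b - 1 / 2) k ≠ 0)
    (hs2 : Summable fun k : ℕ =>
      rf (a - 1) k * rf (a - 1 / 2) k * rf (b - 1) k /
        (rf (2 * a - 1) k * rf (b - 1 / 2) k * (Nat.factorial k : ℝ))) :
    (∑' k : ℕ,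
        rf 1 k * rf a k * rf (a + 1 / 2) k * rf b k /
          (rf 2 k * rf (2 * a) k * rf (b + 1 / 2) k * (Nat.factorial k : ℝ)))
      = (2 * b - 1) / ((a - 1) * (b - 1)) *
          (-1 + ∑' k : ℕ,
            rf (a - 1) k * rf (a - 1 / 2) k * rf (b - 1) k /
              (rf (2 * a - 1) k * rf (b - 1 / 2) k *
                (Nat.factorial k : ℝ))) := by
  have hterms : (fun k : ℕ =>
        rf 1 k * rf a k * rf (a + 1 / 2) k * rf b k /
          (rf 2 k * rf (2 * a) k * rf (b + 1 / 2) k * (Nat.factorial k : ℝ))) =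
        hypergeometricTerm [1, a, a + 1 / 2, b] [2, 2 * a, b + 1 / 2] 1 ∧
      (fun k : ℕ =>
        rf (a - 1) k * rf (a - 1 / 2) k * rf (b - 1) k /
          (rf (2 * a - 1) k * rf (b - 1 / 2) k * (Nat.factorial k : ℝ))) =
        hypergeometricTerm [a - 1, a - 1 / 2, b - 1] [2 * a - 1, b - 1 / 2] 1 := by
    constructor <;> ext k <;>
      simp only [hypergeometricTerm, List.map_cons, List.map_nil, List.prod_cons, List.prod_nil,
        mul_one, one_pow] <;>
      ring
  have h2a : 2 * a - 1 ≠ 0 := by simpa [rf] using h2a' 1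
  have hb12 : b - 1 / 2 ≠ 0 := by simpa [rf] using hb2' 1
  have h2b : 2 * b - 1 ≠ 0 := by contrapose! hb12; linarith
  have ha1 : a - 1 ≠ 0 := sub_ne_zero.2 ha
  have hb1 : b - 1 ≠ 0 := sub_ne_zero.2 hb
  rw [hterms.1, hterms.2, ← hypergeometric, ← hypergeometric,
    hypergeometric_three_two_eq_one_add a b 1 h2a hb12 (hterms.2 ▸ hs2)]
  field_simp
  ring

/-- the contiguous relation
₄F₃(1, a, a+1/2, b; 2, 2a, b+1/2; 1)
 = ((2b-1)/((a-1)(b-1)))·(-1 + ₃F₂(a-1, a-1/2, b-1; 2a-1, b-1/2; 1)),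
for real a, b such that no denominator Pochhammer symbol vanishes and both
series converge. -/
theorem stmt4 (a b : ℝ) (ha : a ≠ 1) (hb : b ≠ 1)
    (h2a : ∀ k : ℕ, rf (2 * a) k ≠ 0) (hb2 : ∀ k : ℕ, rf (b + 1 / 2) k ≠ 0)
    (h2a' : ∀ k : ℕ, rf (2 * a - 1) k ≠ 0)
    (hb2' : ∀ k : ℕ, rf (b - 1 / 2) k ≠ 0)
    (hs1 : Summable fun k : ℕ =>
      rf 1 k * rf a k * rf (a + 1 / 2) k * rf b k /
        (rf 2 k * rf (2 * a) k * rf (b + 1 / 2) k * (Nat.factorial k : ℝ)))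
    (hs2 : Summable fun k : ℕ =>
      rf (a - 1) k * rf (a - 1 / 2) k * rf (b - 1) k /
        (rf (2 * a - 1) k * rf (b - 1 / 2) k * (Nat.factorial k : ℝ))) :
    (∑' k : ℕ,
        rf 1 k * rf a k * rf (a + 1 / 2) k * rf b k /
          (rf 2 k * rf (2 * a) k * rf (b + 1 / 2) k * (Nat.factorial k : ℝ)))
      = (2 * b - 1) / ((a - 1) * (b - 1)) *
          (-1 + ∑' k : ℕ,
            rf (a - 1) k * rf (a - 1 / 2) k * rf (b - 1) k /
              (rf (2 * a - 1) k * rf (b - 1 / 2) k *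
                (Nat.factorial k : ℝ))) :=
  stmt4_general a b ha hb h2a' hb2' hs2
end

section
/- For every integer n ≥ 2, Σ_{i=2}^{n} i · (i-1) · (2n-i-2)! / (2(n-i))!! = 2^(n-1) · (n-1)!. -/
/-! The substitution `n = m + 2`, `i = n - j` turns the `i`-th summand into `lengthTerm m j`.
The sums `S m = ∑ j, lengthTerm m j` satisfy `S (m + 1) = (2 m + 4) S m`, because
`lengthTerm (m + 1) j - (2 m + 4) lengthTerm m j` telescopes in `j` (a Wilf–Zeilberger pair). -/

open Nat Finset

theorem df_eq_doubleFactorial : ∀ n, df n = n‼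
  | 0 => rfl
  | 1 => rfl
  | n + 2 => by rw [df, df_eq_doubleFactorial n, doubleFactorial_add_two]

noncomputable def lengthTerm (m j : ℕ) : ℝ :=
  ((m : ℝ) + 2 - j) * ((m : ℝ) + 1 - j) * (m + j)! / (2 ^ j * j !)

noncomputable def lengthTermCert (m j : ℕ) : ℝ :=
  -2 * j * ((m : ℝ) + 2 - j) * ((m : ℝ) + 3 - j) * (m + j)! / (2 ^ j * j !)

theorem lengthTerm_succ_sub (m j : ℕ) :
    lengthTerm (m + 1) j - (2 * m + 4) * lengthTerm m j
      = lengthTermCert m (j + 1) - lengthTermCert m j := by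
  rw [lengthTerm, lengthTerm, lengthTermCert, lengthTermCert,
    show m + 1 + j = m + j + 1 by omega, show m + (j + 1) = m + j + 1 by omega,
    factorial_succ, factorial_succ]
  push_cast
  field_simp
  ring

theorem lengthTerm_self_add_one (m : ℕ) : lengthTerm m (m + 1) = 0 := by
  simp [lengthTerm]

theorem lengthTermCert_zero (m : ℕ) : lengthTermCert m 0 = 0 := by
  simp [lengthTermCert]

theorem lengthTermCert_self_add_two (m : ℕ) : lengthTermCert m (m + 2) = 0 := by
  simp [lengthTermCert]

theorem sum_lengthTerm (m : ℕ) :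
    ∑ j ∈ range (m + 1), lengthTerm m j = 2 ^ (m + 1) * (m + 1)! := by
  induction m with
  | zero => norm_num [lengthTerm]
  | succ m ih =>
    have hstep (j : ℕ) : lengthTerm (m + 1) j
        = (2 * m + 4) * lengthTerm m j + (lengthTermCert m (j + 1) - lengthTermCert m j) := by
      linarith [lengthTerm_succ_sub m j]
    calc ∑ j ∈ range (m + 2), lengthTerm (m + 1) j
        = (2 * m + 4) * ∑ j ∈ range (m + 2), lengthTerm m j
            + (lengthTermCert m (m + 2) - lengthTermCert m 0) := by
          simp only [hstep, sum_add_distrib, sum_range_sub, mul_sum]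
      _ = 2 ^ (m + 2) * (m + 2)! := by
          rw [sum_range_succ, lengthTerm_self_add_one, add_zero, ih,
            lengthTermCert_self_add_two, lengthTermCert_zero, factorial_succ (m + 1)]
          push_cast
          ring

theorem sum_Icc_eq_sum_lengthTerm (m : ℕ) :
    ∑ i ∈ Icc 2 (m + 2),
        (i : ℝ) * ((i : ℝ) - 1) * ((2 * (m + 2) - i - 2)! : ℝ) / (df (2 * (m + 2 - i)) : ℝ)
      = ∑ j ∈ range (m + 1), lengthTerm m j := by
  refine sum_nbij' (fun i ↦ m + 2 - i) (fun j ↦ m + 2 - j) ?_ ?_ ?_ ?_ ?_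
  · intro i hi; simp only [mem_Icc, mem_range] at hi ⊢; omega
  · intro j hj; simp only [mem_Icc, mem_range] at hj ⊢; omega
  · intro i hi; simp only [mem_Icc] at hi; omega
  · intro j hj; simp only [mem_range] at hj; omega
  intro i hi
  obtain ⟨hi2, him⟩ := mem_Icc.mp hi
  obtain ⟨j, rfl⟩ := exists_add_of_le hi2
  have hj : j ≤ m := by omega
  rw [lengthTerm, df_eq_doubleFactorial, show 2 * (m + 2) - (2 + j) - 2 = m + (m - j) by omega,
    show m + 2 - (2 + j) = m - j by omega, doubleFactorial_two_mul]
  push_cast [hj]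
  ring

/-- Σ_{i=2}^{n} i(i-1)(2n-i-2)!/(2(n-i))‼ = 2^(n-1)(n-1)!. -/
theorem stmt7 (n : ℕ) (hn : 2 ≤ n) :
    ∑ i ∈ Finset.Icc 2 n,
        (i : ℝ) * ((i : ℝ) - 1) * (Nat.factorial (2 * n - i - 2) : ℝ) /
          (df (2 * (n - i)) : ℝ)
      = 2 ^ (n - 1) * (Nat.factorial (n - 1) : ℝ) := by
  obtain ⟨m, rfl⟩ : ∃ m, n = m + 2 := ⟨n - 2, by omega⟩
  rw [sum_Icc_eq_sum_lengthTerm, sum_lengthTerm]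
  rfl
end

section
/- For every integer n ≥ 2, Σ_{k=0}^{n-2} (n-k-1)(n-k)·(n+k-2)!/(k!·2^k) = 2^(n-1)·(n-1)!. -/
noncomputable def Tm (n k : ℕ) : ℝ :=
  ((n - k - 1 : ℕ) : ℝ) * ((n - k : ℕ) : ℝ) * (Nat.factorial (n + k - 2) : ℝ) /
    ((Nat.factorial k : ℝ) * 2 ^ k)

noncomputable def Gg (n k : ℕ) : ℝ :=
  2 * k * ((n : ℝ) - k) * ((n : ℝ) + 1 - k) * (Nat.factorial (n + k - 2) : ℝ) /
    ((Nat.factorial k : ℝ) * 2 ^ k)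

lemma per_term (n k : ℕ) (hn : 2 ≤ n) (hk : k < n - 1) :
    Tm (n + 1) k = 2 * n * Tm n k - (Gg n (k + 1) - Gg n k) := by
  have hk2 : k + 2 ≤ n := by omega
  unfold Tm Gg
  have h1 : n + 1 - k - 1 = n - k := by omega
  have h2 : (n + 1) + k - 2 = (n + k - 2) + 1 := by omega
  have h3 : n + (k + 1) - 2 = (n + k - 2) + 1 := by omega
  have h4 : (n + k - 2) + 1 = n + k - 1 := by omega
  rw [h1, h2, h3]
  simp only [Nat.factorial_succ]
  have hc1 : ((n - k : ℕ) : ℝ) = (n : ℝ) - k := by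
    have h : k ≤ n := by omega
    exact Nat.cast_sub h
  have hc2 : ((n - k - 1 : ℕ) : ℝ) = (n : ℝ) - k - 1 := by
    have h : k + 1 ≤ n := by omega
    rw [Nat.sub_sub]
    rw [Nat.cast_sub h]
    push_cast; ring
  have hc3 : ((n + 1 - k : ℕ) : ℝ) = (n : ℝ) + 1 - k := by
    have h : k ≤ n + 1 := by omega
    rw [Nat.cast_sub h]; push_cast; ring
  have hc4 : ((n + k - 1 : ℕ) : ℝ) = (n : ℝ) + k - 1 := by
    have h : 1 ≤ n + k := by omega
    rw [Nat.cast_sub h]; push_cast; ring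
  have hc5 : ((n + k - 2 : ℕ) : ℝ) = (n : ℝ) + k - 2 := by
    rw [Nat.cast_sub (by omega)]; push_cast; ring
  have hC : ((Nat.factorial k : ℝ)) ≠ 0 := by positivity
  have hP : ((2 : ℝ) ^ k) ≠ 0 := by positivity
  have hK : ((k : ℝ) + 1) ≠ 0 := by positivity
  push_cast
  rw [hc1, hc2, hc3, hc5]
  field_simp
  ring

lemma gzero (n : ℕ) : Gg n 0 = 0 := by simp [Gg]

lemma last_term (n : ℕ) (hn : 2 ≤ n) : Tm (n + 1) (n - 1) = Gg n (n - 1) := by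
  unfold Tm Gg
  have h1 : n + 1 - (n - 1) - 1 = 1 := by omega
  have h2 : n + 1 - (n - 1) = 2 := by omega
  have h3 : (n + 1) + (n - 1) - 2 = (n + (n - 1) - 2) + 1 := by omega
  rw [h1, h2, h3]
  simp only [Nat.factorial_succ]
  have h7 : (((n : ℕ) - 1 : ℕ) : ℝ) = (n : ℝ) - 1 := by
    rw [Nat.cast_sub (by omega)]; push_cast; ring
  have h8 : ((n + (n - 1) - 2 : ℕ) : ℝ) = 2 * (n : ℝ) - 3 := by
    have h : n + (n - 1) - 2 = 2 * n - 3 := by omega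
    rw [h, Nat.cast_sub (by omega)]; push_cast; ring
  push_cast
  rw [h7, h8]
  ring

lemma sum_eq (n : ℕ) (hn : 2 ≤ n) :
    ∑ k ∈ Finset.range (n - 1), Tm n k = 2 ^ (n - 1) * (Nat.factorial (n - 1) : ℝ) := by
  induction n, hn using Nat.le_induction with
  | base =>
    simp [Tm, Nat.factorial]
  | succ n hn ih =>
    have hrange : n + 1 - 1 = (n - 1) + 1 := by omega
    rw [hrange, Finset.sum_range_succ]
    have hsum : ∑ k ∈ Finset.range (n - 1), Tm (n + 1) k
        = 2 * n * (∑ k ∈ Finset.range (n - 1), Tm n k)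
          - (Gg n (n - 1) - Gg n 0) := by
      rw [Finset.mul_sum, ← Finset.sum_range_sub (fun k => Gg n k),
        ← Finset.sum_sub_distrib]
      exact Finset.sum_congr rfl fun k hk =>
        per_term n k hn (Finset.mem_range.mp hk)
    rw [hsum, gzero, last_term n hn, ih]
    have hfac : (Nat.factorial ((n - 1) + 1) : ℝ) = (n : ℝ) * Nat.factorial (n - 1) := by
      rw [Nat.factorial_succ]
      have h7 : (((n : ℕ) - 1 : ℕ) : ℝ) = (n : ℝ) - 1 := by
        rw [Nat.cast_sub (by omega)]; push_cast; ring
      push_cast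
      rw [h7]; ring
    rw [hfac, pow_succ]
    ring


/-- Σ_{k=0}^{n-2} (n-k-1)(n-k)(n+k-2)!/(k!·2^k) = 2^(n-1)(n-1)!. -/
theorem stmt17 (n : ℕ) (hn : 2 ≤ n) :
    ∑ k ∈ Finset.range (n - 1),
        ((n - k - 1 : ℕ) : ℝ) * ((n - k : ℕ) : ℝ) *
          (Nat.factorial (n + k - 2) : ℝ) /
          ((Nat.factorial k : ℝ) * 2 ^ k)
      = 2 ^ (n - 1) * (Nat.factorial (n - 1) : ℝ) := sum_eq n hn
end
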